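/- arXiv:2012.11200 — 6 statements merged into one kernel-verified Lean document; each statement's English description precedes it below -/
import Mathlib

section
/- Partition lemma for bounded time scales: Let 𝕋 be a bounded time scale with minimum 0 and maximum b ∈ 𝕋, and let δ > 0. Then there exist n ∈ ℕ and points 0 = t₀ < t₁ < ⋯ < t_n = b, all belonging to 𝕋, such that for each i < n either t_{i+1} − t_i ≤ δ, or t_{i+1} − t_i > δ and the open interval (t_i, t_{i+1}) contains no point of 𝕋 (i.e. t_{i+1} = σ(t_i)). -/
/-!
Walk down from `b` in strides of `δ`. Given `b ∈ T` with `b > δ`, let `s` be the largest point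
of `T` in `[0, b - δ]` and `q` the smallest point of `T` in `[b - δ, b]`. Then `T` has no point
strictly between `s` and `q`, and `b - q ≤ δ`, so a partition ending at `s` extends by the gap
step `s → q` and the short step `q → b`. Since `s ≤ b - δ`, induction on `⌈b / δ⌉` finishes.
-/

def AdmissibleStep (T : Set ℝ) (δ a c : ℝ) : Prop :=
  c - a ≤ δ ∨ (δ < c - a ∧ ∀ s ∈ T, ¬(a < s ∧ s < c))

def HasAdmissiblePartition (T : Set ℝ) (δ b : ℝ) : Prop :=
  ∃ (n : ℕ) (t : Fin (n + 1) → ℝ),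
    t 0 = 0 ∧ t (Fin.last n) = b ∧ StrictMono t ∧ (∀ i, t i ∈ T) ∧
    ∀ i : Fin n, AdmissibleStep T δ (t i.castSucc) (t i.succ)

namespace AdmissibleStep

variable {T : Set ℝ} {δ a c : ℝ}

theorem of_sub_le (h : c - a ≤ δ) : AdmissibleStep T δ a c :=
  Or.inl h

theorem of_gap (h : ∀ s ∈ T, ¬(a < s ∧ s < c)) : AdmissibleStep T δ a c :=
  (le_or_gt (c - a) δ).imp id fun hlt => ⟨hlt, h⟩

end AdmissibleStep

namespace HasAdmissiblePartition

variable {T : Set ℝ} {δ a q : ℝ}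

theorem zero (h0 : (0 : ℝ) ∈ T) : HasAdmissiblePartition T δ 0 :=
  ⟨0, fun _ => 0, rfl, rfl, Subsingleton.strictMono (α := Fin 1) _, fun _ => h0, Fin.elim0⟩

theorem snoc (h : HasAdmissiblePartition T δ a) (hq : q ∈ T) (haq : a < q)
    (hstep : AdmissibleStep T δ a q) : HasAdmissiblePartition T δ q := by
  obtain ⟨n, t, h0, hlast, hmono, hT, hsteps⟩ := h
  refine ⟨n + 1, Fin.snoc t q, ?_, Fin.snoc_last _ _, ?_, ?_, ?_⟩
  · exact (Fin.snoc_castSucc (α := fun _ => ℝ) (i := 0) _ _).trans h0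
  · refine Fin.strictMono_iff_lt_succ.2 fun i => ?_
    induction i using Fin.lastCases with
    | last => simpa [hlast] using haq
    | cast j =>
      rw [Fin.succ_castSucc, Fin.snoc_castSucc, Fin.snoc_castSucc]
      exact hmono Fin.castSucc_lt_succ
  · intro i
    induction i using Fin.lastCases with
    | last => simpa using hq
    | cast j => simpa using hT j
  · intro i
    induction i using Fin.lastCases with
    | last => simpa [hlast] using hstep
    | cast j =>
      rw [Fin.succ_castSucc, Fin.snoc_castSucc, Fin.snoc_castSucc]
      exact hsteps j

theorem extend (h : HasAdmissiblePartition T δ a) (hq : q ∈ T) (haq : a ≤ q)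
    (hstep : AdmissibleStep T δ a q) : HasAdmissiblePartition T δ q := by
  rcases haq.eq_or_lt with rfl | hlt
  · exact h
  · exact h.snoc hq hlt hstep

end HasAdmissiblePartition

theorem IsClosed.exists_gap_around {T : Set ℝ} (hcl : IsClosed T) {a b c : ℝ} (ha : a ∈ T)
    (hb : b ∈ T) (hac : a ≤ c) (hcb : c ≤ b) :
    ∃ s ∈ T, ∃ q ∈ T, a ≤ s ∧ s ≤ c ∧ c ≤ q ∧ q ≤ b ∧ ∀ x ∈ T, ¬(s < x ∧ x < q) := by
  obtain ⟨s, ⟨hsT, has, hsc⟩, hs_max⟩ :=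
    (isCompact_Icc.inter_left hcl).exists_isGreatest ⟨a, ha, le_rfl, hac⟩
  obtain ⟨q, ⟨hqT, hcq, hqb⟩, hq_min⟩ :=
    (isCompact_Icc.inter_left hcl).exists_isLeast ⟨b, hb, hcb, le_rfl⟩
  refine ⟨s, hsT, q, hqT, has, hsc, hcq, hqb, fun x hxT ⟨hsx, hxq⟩ => ?_⟩
  rcases le_total x c with hxc | hcx
  · exact hsx.not_ge (hs_max ⟨hxT, has.trans hsx.le, hxc⟩)
  · exact hxq.not_ge (hq_min ⟨hxT, hcx, hxq.le.trans hqb⟩)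

theorem hasAdmissiblePartition_of_le_mul {T : Set ℝ} (hcl : IsClosed T) (h0 : (0 : ℝ) ∈ T)
    {δ : ℝ} (hδ : 0 < δ) (n : ℕ) {b : ℝ} (hbT : b ∈ T) (hb0 : 0 ≤ b) (hbn : b ≤ n * δ) :
    HasAdmissiblePartition T δ b := by
  induction n generalizing b with
  | zero =>
    rw [Nat.cast_zero, zero_mul] at hbn
    exact (HasAdmissiblePartition.zero h0).extend hbT hb0 (.of_sub_le (by linarith))
  | succ n ih =>
    rcases le_or_gt b δ with hbδ | hδb
    · exact (HasAdmissiblePartition.zero h0).extend hbT hb0 (.of_sub_le (by linarith))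
    obtain ⟨s, hsT, q, hqT, hs0, hsc, hcq, hqb, hgap⟩ :=
      hcl.exists_gap_around h0 hbT (by linarith : (0 : ℝ) ≤ b - δ) (by linarith)
    have hs : HasAdmissiblePartition T δ s := ih hsT hs0 (by push_cast at hbn; linarith)
    exact (hs.extend hqT (hsc.trans hcq) (.of_gap hgap)).extend hbT hqb
      (.of_sub_le (by linarith))

/-- Partition lemma for bounded time scales: for a time scale `T` with minimum `0` and
maximum `b`, and any `δ > 0`, there is a finite partition `0 = t₀ < t₁ < ⋯ < tₙ = b`
with all points in `T` such that each step is either of length `≤ δ`, or of length `> δ`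
with no point of `T` strictly inside the step (i.e. `t_{i+1} = σ(t_i)`). -/
theorem stmt_1 (T : Set ℝ) (hcl : IsClosed T) (b : ℝ) (h0T : (0 : ℝ) ∈ T) (hbT : b ∈ T)
    (hsub : T ⊆ Set.Icc 0 b) (δ : ℝ) (hδ : 0 < δ) :
    ∃ (n : ℕ) (t : Fin (n + 1) → ℝ),
      t 0 = 0 ∧ t (Fin.last n) = b ∧ StrictMono t ∧ (∀ i, t i ∈ T) ∧
      ∀ i : Fin n,
        t i.succ - t i.castSucc ≤ δ ∨
          (δ < t i.succ - t i.castSucc ∧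
            ∀ s ∈ T, ¬(t i.castSucc < s ∧ s < t i.succ)) :=
  hasAdmissiblePartition_of_le_mul hcl h0T hδ ⌈b / δ⌉₊ hbT (hsub h0T).2
    ((div_le_iff₀ hδ).1 (Nat.le_ceil _))
end

section
/- Optional Sampling Theorem on time scales (martingale case): Let 𝕋 be a bounded time scale with minimum 0 and maximum b ∈ 𝕋, and let X = (X_t)_{t∈𝕋} be a right-continuous martingale with respect to a filtration (ℱ_t)_{t∈𝕋} on a probability space (Ω, 𝒜, P) (so X_b serves as a last element). If S₁ and S₂ are stopping times relative to (ℱ_t) with S₁ ≤ S₂ pointwise, then X_{S₁} and X_{S₂} are integrable and E[X_{S₂} | ℱ_{S₁}] = X_{S₁} P-almost surely. -/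
/-!
Round a stopping time `S` up to the finite grids `{e 0, …, e k, b}`, where `e` enumerates a
countable set that approximates every time from the right: these rounding maps are closure
operators, so the rounded times `S_k` are stopping times with finitely many values, and the
discrete optional sampling theorem gives `X_{S_k} = E[X_b | ℱ_{S_k}]`. The family `X_{S_k}` is
uniformly integrable (conditional expectations of one integrable variable) and converges pointwise
to `X_S` by right continuity, so by Vitali `X_S` is integrable and has the same integrals as `X_b`
over every set of `ℱ_S ⊆ ℱ_{S_k}`. Since a right-continuous adapted process is progressively
measurable, `X_S` is `ℱ_S`-measurable, hence `X_S = E[X_b | ℱ_S]`; the tower property finishes.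
-/

open MeasureTheory Filter Topology Set TopologicalSpace

section ClosedSubset

variable {α : Type*} [ConditionallyCompleteLinearOrder α] [TopologicalSpace α] [OrderTopology α]
  {s : Set α}

theorem IsClosed.preimage_val_Ioi_eq_univ_or_Ioi (hs : IsClosed s) (a : α) :
    (Subtype.val ⁻¹' Ioi a : Set s) = univ ∨ ∃ c : s, (Subtype.val ⁻¹' Ioi a : Set s) = Ioi c := by
  by_cases! h : ∃ x ∈ s, x ≤ a
  · right
    have hne : (s ∩ Iic a).Nonempty := let ⟨x, hx, hxa⟩ := h; ⟨x, hx, hxa⟩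
    have hbdd : BddAbove (s ∩ Iic a) := ⟨a, fun _ hx => hx.2⟩
    obtain ⟨hcs, hca⟩ := (hs.inter isClosed_Iic).csSup_mem hne hbdd
    refine ⟨⟨_, hcs⟩, ext fun x => ⟨fun hx => hca.trans_lt hx, fun hx => ?_⟩⟩
    by_contra! hxa
    exact (le_csSup hbdd ⟨x.2, not_lt.1 hxa⟩).not_gt hx
  · exact .inl (eq_univ_of_forall fun x => h x x.2)

theorem IsClosed.preimage_val_Iio_eq_univ_or_Iio (hs : IsClosed s) (a : α) :
    (Subtype.val ⁻¹' Iio a : Set s) = univ ∨ ∃ c : s, (Subtype.val ⁻¹' Iio a : Set s) = Iio c := by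
  by_cases! h : ∃ x ∈ s, a ≤ x
  · right
    have hne : (s ∩ Ici a).Nonempty := let ⟨x, hx, hxa⟩ := h; ⟨x, hx, hxa⟩
    have hbdd : BddBelow (s ∩ Ici a) := ⟨a, fun _ hx => hx.2⟩
    obtain ⟨hcs, hca⟩ := (hs.inter isClosed_Ici).csInf_mem hne hbdd
    refine ⟨⟨_, hcs⟩, ext fun x => ⟨fun hx => hx.trans_le hca, fun hx => ?_⟩⟩
    by_contra! hxa
    exact (csInf_le hbdd ⟨x.2, not_lt.1 hxa⟩).not_gt hx
  · exact .inl (eq_univ_of_forall fun x => h x x.2)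

theorem IsClosed.orderTopology (hs : IsClosed s) : OrderTopology s := by
  refine ⟨le_antisymm (le_generateFrom ?_) ?_⟩
  · rintro _ ⟨a, rfl | rfl⟩
    · exact isOpen_Ioi.preimage continuous_subtype_val
    · exact isOpen_Iio.preimage continuous_subtype_val
  · show TopologicalSpace.generateFrom _ ≤ TopologicalSpace.induced Subtype.val _
    rw [OrderTopology.topology_eq_generate_intervals (α := α), Preorder.topology,
      induced_generateFrom_eq]
    refine le_generateFrom ?_
    rintro _ ⟨_, ⟨a, rfl | rfl⟩, rfl⟩
    · rcases hs.preimage_val_Ioi_eq_univ_or_Ioi a with h | ⟨c, h⟩ <;> rw [h]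
      exacts [.univ, .basic _ ⟨c, .inl rfl⟩]
    · rcases hs.preimage_val_Iio_eq_univ_or_Iio a with h | ⟨c, h⟩ <;> rw [h]
      exacts [.univ, .basic _ ⟨c, .inr rfl⟩]

end ClosedSubset

section RoundingUp

variable {ι : Type*} [LinearOrder ι]

theorem ClosureOperator.exists_isClosed_iff_of_finite {G : Set ι} (hG : G.Finite)
    (hcofinal : ∀ s, ∃ c ∈ G, s ≤ c) : ∃ c : ClosureOperator ι, ∀ x, c.IsClosed x ↔ x ∈ G := by
  have hleast : ∀ s, ∃ c ∈ {c ∈ G | s ≤ c}, ∀ d ∈ {c ∈ G | s ≤ c}, c ≤ d := fun s =>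
    exists_min_image {c ∈ G | s ≤ c} (fun c => c) (hG.subset fun _ h => h.1) (hcofinal s)
  choose f hf hmin using hleast
  exact ⟨.ofPred f (· ∈ G) (fun s => (hf s).2) (fun s => (hf s).1)
    fun _ _ hxy hy => hmin _ _ ⟨hy, hxy⟩, fun _ => Iff.rfl⟩

theorem MeasureTheory.IsStoppingTime.closureOperator_comp {Ω : Type*} {m : MeasurableSpace Ω}
    {ℱ : Filtration ι m} {τ : Ω → ι}
    (hτ : IsStoppingTime ℱ fun ω => (τ ω : WithTop ι)) (c : ClosureOperator ι)
    (hc : (range c).Countable) : IsStoppingTime ℱ fun ω => (c (τ ω) : WithTop ι) := by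
  intro t
  have : {ω | (c (τ ω) : WithTop ι) ≤ t} = ⋃ d ∈ range c ∩ Iic t, {ω | (τ ω : WithTop ι) ≤ d} := by
    ext ω
    simp only [WithTop.coe_le_coe, mem_ofPred_eq, mem_iUnion, mem_inter_iff, mem_range, mem_Iic,
      exists_prop]
    refine ⟨fun h => ⟨_, ⟨⟨_, rfl⟩, h⟩, c.le_closure _⟩, ?_⟩
    rintro ⟨_, ⟨⟨y, rfl⟩, hyt⟩, hτy⟩
    exact (c.closure_min hτy (c.isClosed_closure y)).trans hyt
  rw [this]
  exact .biUnion (hc.mono inter_subset_left) fun d hd => ℱ.mono hd.2 _ (hτ d)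

end RoundingUp

section RightApproximation

variable {ι : Type*} [LinearOrder ι] [TopologicalSpace ι] [OrderTopology ι]

theorem exists_countable_forall_lt_exists_mem_Ico [SecondCountableTopology ι] :
    ∃ C : Set ι, C.Countable ∧ ∀ s t, s < t → ∃ c ∈ C, s ≤ c ∧ c < t := by
  -- a dense set meets every nonempty `Ioo s t`; the remaining gaps `s ⋖ t` have countably many `s`
  obtain ⟨D, hD, hDdense⟩ := TopologicalSpace.exists_countable_dense ι
  refine ⟨D ∪ {x | ∃ y, x ⋖ y}, hD.union countable_setOfPred_covBy_right, fun s t hst => ?_⟩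
  by_cases hcov : s ⋖ t
  · exact ⟨s, .inr ⟨t, hcov⟩, le_rfl, hst⟩
  · obtain ⟨u, hsu, hut⟩ := (not_covBy_iff hst).1 hcov
    obtain ⟨c, ⟨hsc, hct⟩, hcD⟩ := hDdense.inter_open_nonempty _ isOpen_Ioo ⟨u, hsu, hut⟩
    exact ⟨c, .inl hcD, hsc.le, hct⟩

theorem exists_seq_closureOperator_finite_tendsto_nhdsGE [SecondCountableTopology ι] {n : ι}
    (hn : IsTop n) :
    ∃ c : ℕ → ClosureOperator ι,
      (∀ k, (range (c k)).Finite) ∧ ∀ s, Tendsto (fun k => c k s) atTop (𝓝[≥] s) := by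
  obtain ⟨C, hC, hC_Ico⟩ := exists_countable_forall_lt_exists_mem_Ico (ι := ι)
  have : Nonempty ι := ⟨n⟩
  obtain ⟨e, hCe⟩ := countable_iff_exists_subset_range.1 hC
  choose c hc using fun k : ℕ => ClosureOperator.exists_isClosed_iff_of_finite
    (((finite_Iic k).image e).insert n) fun s => ⟨n, mem_insert _ _, hn s⟩
  refine ⟨c, fun k => ?_, fun s => ?_⟩
  · rw [← ClosureOperator.setOfPred_isClosed_eq_range_closure]
    simpa only [hc, ofPred_mem_eq] using ((finite_Iic k).image e).insert n
  refine tendsto_nhdsWithin_iff.2 ⟨tendsto_order.2 ⟨fun a has => ?_, fun t hst => ?_⟩,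
    .of_forall fun k => (c k).le_closure s⟩
  · exact .of_forall fun k => has.trans_le ((c k).le_closure s)
  · obtain ⟨d, hdC, hsd, hdt⟩ := hC_Ico s t hst
    obtain ⟨k₀, rfl⟩ := hCe hdC
    filter_upwards [eventually_ge_atTop k₀] with k hk
    exact ((c k).closure_min hsd ((hc k _).2 (mem_insert_of_mem _ ⟨k₀, hk, rfl⟩))).trans_lt hdt

end RightApproximation

theorem stronglyMeasurable_uncurry_comp_of_countable_range {α ι Ω β : Type*} [MeasurableSpace α]
    [MeasurableSpace ι] [MeasurableSingletonClass ι] {mΩ : MeasurableSpace Ω} [TopologicalSpace β]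
    [PseudoMetrizableSpace β] {X : ι → Ω → β} (hX : ∀ i, StronglyMeasurable (X i)) {g : α → ι}
    (hg : Measurable g) (hg_range : (range g).Countable) :
    StronglyMeasurable fun p : α × Ω => X (g p.1) p.2 := by
  borelize β
  have : Countable (range g) := hg_range.to_subtype
  have hX_range : StronglyMeasurable fun q : range g × Ω => X q.1 q.2 := by
    refine stronglyMeasurable_iff_measurable_separable.2
      ⟨measurable_from_prod_countable_right fun d => (hX d).measurable, ?_⟩
    refine (IsSeparable.iUnion fun d : range g => (hX d).isSeparable_range).mono ?_
    rintro _ ⟨⟨d, ω⟩, rfl⟩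
    exact mem_iUnion.2 ⟨d, ω, rfl⟩
  exact hX_range.comp_measurable
    (g := fun p : α × Ω => ((⟨g p.1, mem_range_self _⟩ : range g), p.2))
    ((hg.comp measurable_fst).subtype_mk.prodMk measurable_snd)

theorem MeasureTheory.StronglyAdapted.isStronglyProgressive_of_rightContinuous {ι Ω β : Type*}
    [LinearOrder ι] [TopologicalSpace ι] [OrderTopology ι] [SecondCountableTopology ι]
    [MeasurableSpace ι] [BorelSpace ι] {m : MeasurableSpace Ω} {ℱ : Filtration ι m}
    [TopologicalSpace β] [PseudoMetrizableSpace β] {X : ι → Ω → β} (hX : StronglyAdapted ℱ X)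
    (hX_rc : ∀ ω t, ContinuousWithinAt (fun s => X s ω) (Ici t) t) :
    IsStronglyProgressive ℱ X := by
  intro i
  -- rounding up inside `Iic i`, whose top element is `i`, keeps the approximations `ℱ i`-measurable
  obtain ⟨c, hc_finite, hc_tendsto⟩ :=
    exists_seq_closureOperator_finite_tendsto_nhdsGE (ι := Iic i) (n := ⟨i, le_rfl⟩) fun s => s.2
  refine stronglyMeasurable_of_tendsto (f := fun k (p : Iic i × Ω) => X (c k p.1) p.2) atTop
    (fun k => ?_) (tendsto_pi_nhds.2 fun p => ?_)
  · exact stronglyMeasurable_uncurry_comp_of_countable_range (X := fun s : Iic i => X s)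
      (fun s => (hX s).mono (ℱ.mono s.2)) (c k).monotone.measurable (hc_finite k).countable
  · have hval : Tendsto (fun k => (c k p.1 : ι)) atTop (𝓝[≥] (p.1 : ι)) :=
      (continuous_subtype_val.continuousWithinAt.tendsto_nhdsWithin fun _ h => h).comp
        (hc_tendsto p.1)
    exact (hX_rc p.2 p.1).tendsto.comp hval

theorem MeasureTheory.ae_eq_condExp_of_tendsto_ae {Ω : Type*} {m m₀ : MeasurableSpace Ω}
    {μ : Measure Ω} [IsFiniteMeasure μ] {mk : ℕ → MeasurableSpace Ω} (hm : ∀ k, m ≤ mk k)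
    (hmk : ∀ k, mk k ≤ m₀) {f : Ω → ℝ} (hf : Integrable f μ) {Y : ℕ → Ω → ℝ} {Z : Ω → ℝ}
    (hY : ∀ k, Y k =ᵐ[μ] μ[f|mk k]) (hYZ : ∀ᵐ ω ∂μ, Tendsto (fun k => Y k ω) atTop (𝓝 (Z ω)))
    (hZ : StronglyMeasurable[m] Z) : Z =ᵐ[μ] μ[f|m] := by
  have hY_ui : UniformIntegrable Y 1 μ :=
    (hf.uniformIntegrable_condExp hmk).ae_eq fun k => (hY k).symm
  have hZ_int : Integrable Z μ := hY_ui.integrable_of_ae_tendsto hYZ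
  have hY_int : ∀ k, Integrable (Y k) μ := fun k => integrable_condExp.congr (hY k).symm
  have hYZ_L1 : Tendsto (fun k => eLpNorm (Y k - Z) 1 μ) atTop (𝓝 0) :=
    tendsto_Lp_finite_of_tendsto_ae le_rfl ENNReal.one_ne_top (fun k => hY_ui.1 k)
      (memLp_one_iff_integrable.2 hZ_int) hY_ui.2.1 hYZ
  refine ae_eq_condExp_of_forall_setIntegral_eq ((hm 0).trans (hmk 0)) hf
    (fun s _ _ => hZ_int.integrableOn) (fun s hs _ => ?_) hZ.aestronglyMeasurable
  have hY_setIntegral : ∀ k, ∫ ω in s, Y k ω ∂μ = ∫ ω in s, f ω ∂μ := fun k => by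
    rw [integral_congr_ae (ae_restrict_of_ae (hY k))]
    exact setIntegral_condExp (hmk k) hf (hm k s hs)
  refine tendsto_nhds_unique (tendsto_setIntegral_of_L1' Z hZ_int.1 (.of_forall hY_int) hYZ_L1 s) ?_
  simp_rw [hY_setIntegral]
  exact tendsto_const_nhds

section RightContinuousMartingale

variable {ι Ω : Type*} [LinearOrder ι] [TopologicalSpace ι] [OrderTopology ι]
  [SecondCountableTopology ι] [MeasurableSpace ι] [BorelSpace ι] [Nonempty ι]
  {m : MeasurableSpace Ω} {μ : Measure Ω} [IsFiniteMeasure μ] {ℱ : Filtration ι m}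
  {X : ι → Ω → ℝ} {n : ι}

namespace MeasureTheory.Martingale

theorem stoppedValue_ae_eq_condExp_of_rightContinuous (hX : Martingale X ℱ μ)
    (hX_rc : ∀ ω t, ContinuousWithinAt (fun s => X s ω) (Ici t) t) (hn : IsTop n) {τ : Ω → ι}
    (hτ : IsStoppingTime ℱ fun ω => (τ ω : WithTop ι)) :
    stoppedValue X (fun ω => (τ ω : WithTop ι)) =ᵐ[μ] μ[X n|hτ.measurableSpace] := by
  obtain ⟨c, hc_finite, hc_tendsto⟩ := exists_seq_closureOperator_finite_tendsto_nhdsGE hn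
  have hτc : ∀ k, IsStoppingTime ℱ fun ω => (c k (τ ω) : WithTop ι) := fun k =>
    hτ.closureOperator_comp (c k) (hc_finite k).countable
  have hτc_le : ∀ k ω, (c k (τ ω) : WithTop ι) ≤ n := fun k ω => WithTop.coe_le_coe.2 (hn _)
  refine ae_eq_condExp_of_tendsto_ae (mk := fun k => (hτc k).measurableSpace)
    (fun k => hτ.measurableSpace_mono (hτc k) fun ω => WithTop.coe_le_coe.2 ((c k).le_closure _))
    (fun k => (hτc k).measurableSpace_le_of_le (hτc_le k)) (hX.integrable n)
    (fun k => hX.stoppedValue_ae_eq_condExp_of_le_const_of_countable_range (hτc k) (hτc_le k)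
      (((hc_finite k).countable.image _).mono
        (range_subset_iff.2 fun _ => mem_image_of_mem _ (mem_range_self _))))
    (.of_forall fun ω => (hX_rc ω (τ ω)).tendsto.comp (hc_tendsto (τ ω))) ?_
  exact (measurable_stoppedValue
    (hX.stronglyAdapted.isStronglyProgressive_of_rightContinuous hX_rc) hτ).stronglyMeasurable

theorem condExp_stoppedValue_ae_eq_of_rightContinuous (hX : Martingale X ℱ μ)
    (hX_rc : ∀ ω t, ContinuousWithinAt (fun s => X s ω) (Ici t) t) (hn : IsTop n) {σ τ : Ω → ι}
    (hσ : IsStoppingTime ℱ fun ω => (σ ω : WithTop ι))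
    (hτ : IsStoppingTime ℱ fun ω => (τ ω : WithTop ι)) (hστ : ∀ ω, σ ω ≤ τ ω) :
    μ[stoppedValue X (fun ω => (τ ω : WithTop ι))|hσ.measurableSpace] =ᵐ[μ]
      stoppedValue X (fun ω => (σ ω : WithTop ι)) :=
  calc μ[stoppedValue X (fun ω => (τ ω : WithTop ι))|hσ.measurableSpace]
      =ᵐ[μ] μ[μ[X n|hτ.measurableSpace]|hσ.measurableSpace] :=
        condExp_congr_ae (hX.stoppedValue_ae_eq_condExp_of_rightContinuous hX_rc hn hτ)
    _ =ᵐ[μ] μ[X n|hσ.measurableSpace] :=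
        condExp_condExp_of_le (hσ.measurableSpace_mono hτ fun ω => WithTop.coe_le_coe.2 (hστ ω))
          (hτ.measurableSpace_le_of_le fun _ => WithTop.coe_le_coe.2 (hn _))
    _ =ᵐ[μ] stoppedValue X (fun ω => (σ ω : WithTop ι)) :=
        (hX.stoppedValue_ae_eq_condExp_of_rightContinuous hX_rc hn hσ).symm

end MeasureTheory.Martingale

end RightContinuousMartingale

theorem stmt_4_general (T : Set ℝ) (hcl : IsClosed T) (b : ℝ) (hbT : b ∈ T)
    (hsub : T ⊆ Set.Icc 0 b)
    {Ω : Type*} {mΩ : MeasurableSpace Ω} (P : Measure Ω) [IsProbabilityMeasure P]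
    (ℱ : Filtration ↥T mΩ) (X : ↥T → Ω → ℝ)
    (hX : Martingale X ℱ P)
    (hrc : ∀ ω, ∀ t : ↥T, ContinuousWithinAt (fun s : ↥T => X s ω) (Set.Ici t) t)
    (S₁ S₂ : Ω → ↥T) (hS₁ : IsStoppingTime ℱ (fun ω => (S₁ ω : WithTop ↥T)))
    (hS₂ : IsStoppingTime ℱ (fun ω => (S₂ ω : WithTop ↥T)))
    (hle : ∀ ω, S₁ ω ≤ S₂ ω) :
    Integrable (fun ω => X (S₁ ω) ω) P ∧ Integrable (fun ω => X (S₂ ω) ω) P ∧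
      P[fun ω => X (S₂ ω) ω|hS₁.measurableSpace] =ᵐ[P] fun ω => X (S₁ ω) ω := by
  have : OrderTopology T := hcl.orderTopology
  have : Nonempty T := ⟨⟨b, hbT⟩⟩
  have hb : IsTop (⟨b, hbT⟩ : T) := fun s => (hsub s.2).2
  have hS₁_eq := hX.stoppedValue_ae_eq_condExp_of_rightContinuous hrc hb hS₁
  have hS₂_eq := hX.stoppedValue_ae_eq_condExp_of_rightContinuous hrc hb hS₂
  exact ⟨integrable_condExp.congr hS₁_eq.symm, integrable_condExp.congr hS₂_eq.symm,
    hX.condExp_stoppedValue_ae_eq_of_rightContinuous hrc hb hS₁ hS₂ hle⟩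

/-- Optional Sampling Theorem on time scales (martingale case): for a right-continuous
martingale `X` indexed by a bounded time scale `T` (min `0`, max `b`, so `X b` is a
last element) and stopping times `S₁ ≤ S₂`, the stopped values are integrable and
`E[X_{S₂} | ℱ_{S₁}] = X_{S₁}` a.s. -/
theorem stmt_4 (T : Set ℝ) (hcl : IsClosed T) (b : ℝ) (h0T : (0 : ℝ) ∈ T) (hbT : b ∈ T)
    (hsub : T ⊆ Set.Icc 0 b)
    {Ω : Type*} {mΩ : MeasurableSpace Ω} (P : Measure Ω) [IsProbabilityMeasure P]
    (ℱ : Filtration ↥T mΩ) (X : ↥T → Ω → ℝ)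
    (hX : Martingale X ℱ P)
    (hrc : ∀ ω, ∀ t : ↥T, ContinuousWithinAt (fun s : ↥T => X s ω) (Set.Ici t) t)
    (S₁ S₂ : Ω → ↥T) (hS₁ : IsStoppingTime ℱ (fun ω => (S₁ ω : WithTop ↥T)))
    (hS₂ : IsStoppingTime ℱ (fun ω => (S₂ ω : WithTop ↥T)))
    (hle : ∀ ω, S₁ ω ≤ S₂ ω) :
    Integrable (fun ω => X (S₁ ω) ω) P ∧ Integrable (fun ω => X (S₂ ω) ω) P ∧
      P[fun ω => X (S₂ ω) ω|hS₁.measurableSpace] =ᵐ[P] fun ω => X (S₁ ω) ω :=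
  stmt_4_general T hcl b hbT hsub P ℱ X hX hrc S₁ S₂ hS₁ hS₂ hle
end

section
/- Martingale characterization by stopping times on time scales: Let 𝕋 be a bounded time scale with minimum 0 and maximum b ∈ 𝕋, and let X = (X_t)_{t∈𝕋} be a right-continuous adapted process with respect to a filtration (ℱ_t)_{t∈𝕋} on a probability space (Ω, 𝒜, P) such that X_S is integrable for every stopping time S. Then X is a martingale if and only if E[X_S] = E[X_0] for every stopping time S relative to (ℱ_t). -/
/-!
For a martingale the optional sampling identity `E[X_R] = E[X_b]` is elementary when the
stopping time `R` takes finitely many values. A general stopping time `S` is approximated from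
above by such stopping times `R k`, obtained by rounding `S` up to a finite `1/(k+1)`-net of the
compact time scale. Right-continuity gives `X_{R k} → X_S` pointwise, and since
`X_{R k} = E[X_b | ℱ_{R k}]` this family is uniformly integrable, so Vitali's theorem passes the
identity to the limit. Conversely, testing `E[X_R] = E[X_0]` on the two-valued stopping times
`R = i` on `A`, `R = j` off `A` (with `A ∈ ℱ_i`) gives `∫_A X_i = ∫_A X_j`.
-/

open MeasureTheory Filter Set Topology

lemma Set.Finite.countable_range_coe {Ω ι : Type*} {R : Ω → ι} (hfin : (range R).Finite) :
    (range fun ω => (R ω : WithTop ι)).Countable := by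
  rw [range_comp' ((↑) : ι → WithTop ι) R]
  exact (hfin.image _).countable

namespace MeasureTheory

variable {Ω ι E : Type*} {m : MeasurableSpace Ω} {μ : Measure Ω}

lemma stopped_eq_sum_indicator [AddCommMonoid E] {X : ι → Ω → E} {R : Ω → ι}
    (hfin : (range R).Finite) :
    (fun ω => X (R ω) ω) = ∑ t ∈ hfin.toFinset, {ω | R ω = t}.indicator (X t) := by
  ext ω
  rw [Finset.sum_apply, Finset.sum_eq_single_of_mem (R ω) (by simp)]
  · simp
  · intro t _ ht
    exact indicator_of_notMem (show ω ∉ {ω | R ω = t} from Ne.symm ht) _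

section Preorder

variable [Preorder ι] {ℱ : Filtration ι m} {R : Ω → ι}

lemma IsStoppingTime.measurableSet_inter_coe_eq_iff
    (hR : IsStoppingTime ℱ (fun ω => (R ω : WithTop ι))) (s : Set Ω) (t : ι) :
    MeasurableSet[hR.measurableSpace] (s ∩ {ω | R ω = t}) ↔
      MeasurableSet[ℱ t] (s ∩ {ω | R ω = t}) := by
  simpa using hR.measurableSet_inter_eq_iff s t

variable [NormedAddCommGroup E] [NormedSpace ℝ E] [CompleteSpace E] {X : ι → Ω → E}

lemma martingale_of_setIntegral_eq [IsFiniteMeasure μ] (hadp : StronglyAdapted ℱ X)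
    (hint : ∀ i, Integrable (X i) μ)
    (h : ∀ i j, i ≤ j → ∀ A, MeasurableSet[ℱ i] A → ∫ ω in A, X i ω ∂μ = ∫ ω in A, X j ω ∂μ) :
    Martingale X ℱ μ :=
  ⟨hadp, fun i j hij => (ae_eq_condExp_of_forall_setIntegral_eq (ℱ.le i) (hint j)
    (fun _ _ _ => (hint i).integrableOn) (fun A hA _ => h i j hij A hA)
    (hadp i).aestronglyMeasurable).symm⟩

lemma martingale_of_integral_stopped_eq [IsFiniteMeasure μ] (hadp : StronglyAdapted ℱ X)
    (hint : ∀ i, Integrable (X i) μ) (c : E)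
    (h : ∀ R : Ω → ι, IsStoppingTime ℱ (fun ω => (R ω : WithTop ι)) →
      ∫ ω, X (R ω) ω ∂μ = c) :
    Martingale X ℱ μ := by
  classical
  refine martingale_of_setIntegral_eq hadp hint fun i j hij A hA => ?_
  have hAm : MeasurableSet A := ℱ.le i _ hA
  set R : Ω → ι := A.piecewise (fun _ => i) fun _ => j
  have hR : IsStoppingTime ℱ (fun ω => (R ω : WithTop ι)) := by
    simpa only [R, piecewise_op] using isStoppingTime_piecewise_const hij hA
  have hsplit : ∫ ω, X (R ω) ω ∂μ = ∫ ω in A, X i ω ∂μ + ∫ ω in Aᶜ, X j ω ∂μ := by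
    rw [← integral_piecewise hAm (hint i).integrableOn (hint j).integrableOn]
    congr 1 with ω
    by_cases hω : ω ∈ A <;> simp [R, hω]
  refine add_right_cancel (b := ∫ ω in Aᶜ, X j ω ∂μ) ?_
  rw [← hsplit, integral_add_compl hAm (hint j), h R hR]
  exact (h (fun _ => j) (isStoppingTime_const ℱ j)).symm

end Preorder

section PartialOrder

variable [PartialOrder ι] {ℱ : Filtration ι m} {R : Ω → ι}

lemma IsStoppingTime.measurableSet_eq_of_finite_range
    (hR : IsStoppingTime ℱ (fun ω => (R ω : WithTop ι))) (hfin : (range R).Finite) (t : ι) :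
    MeasurableSet[ℱ t] {ω | R ω = t} := by
  simpa using hR.measurableSet_eq_of_countable_range hfin.countable_range_coe t

lemma IsStoppingTime.measurableSet_eq_of_finite_range'
    (hR : IsStoppingTime ℱ (fun ω => (R ω : WithTop ι))) (hfin : (range R).Finite) (t : ι) :
    MeasurableSet[hR.measurableSpace] {ω | R ω = t} := by
  simpa using (hR.measurableSet_inter_coe_eq_iff univ t).mpr
    (by simpa using hR.measurableSet_eq_of_finite_range hfin t)

variable [NormedAddCommGroup E] {X : ι → Ω → E}

lemma integrable_stopped_of_finite_range (hR : IsStoppingTime ℱ (fun ω => (R ω : WithTop ι)))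
    (hfin : (range R).Finite) (hX : ∀ t, Integrable (X t) μ) :
    Integrable (fun ω => X (R ω) ω) μ := by
  rw [stopped_eq_sum_indicator hfin]
  exact integrable_finsetSum' _ fun t _ =>
    (hX t).indicator (ℱ.le t _ (hR.measurableSet_eq_of_finite_range hfin t))

lemma StronglyAdapted.stronglyMeasurable_stopped_of_finite_range (hX : StronglyAdapted ℱ X)
    (hR : IsStoppingTime ℱ (fun ω => (R ω : WithTop ι))) (hfin : (range R).Finite) :
    StronglyMeasurable[hR.measurableSpace] (fun ω => X (R ω) ω) := by
  rw [stopped_eq_sum_indicator hfin]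
  refine Finset.stronglyMeasurable_sum _ fun t _ => ?_
  have hRt := hR.measurableSet_eq_of_finite_range hfin t
  refine StronglyMeasurable.stronglyMeasurable_of_measurableSpace_le_on hRt (fun s hs => ?_)
    ((hX t).indicator hRt) fun ω hω => indicator_of_notMem hω _
  rw [inter_comm] at hs ⊢
  exact (hR.measurableSet_inter_coe_eq_iff s t).mpr hs

variable [NormedSpace ℝ E] [CompleteSpace E]

lemma Martingale.setIntegral_stopped_eq_of_finite_range [SigmaFiniteFiltration μ ℱ]
    (hX : Martingale X ℱ μ) (hR : IsStoppingTime ℱ (fun ω => (R ω : WithTop ι)))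
    (hfin : (range R).Finite) {n : ι} (hRn : ∀ ω, R ω ≤ n) {A : Set Ω}
    (hA : MeasurableSet[hR.measurableSpace] A) :
    ∫ ω in A, X (R ω) ω ∂μ = ∫ ω in A, X n ω ∂μ := by
  set F := hfin.toFinset
  have hAt : ∀ t, MeasurableSet[ℱ t] (A ∩ {ω | R ω = t}) := fun t =>
    (hR.measurableSet_inter_coe_eq_iff A t).mp
      (hA.inter (hR.measurableSet_eq_of_finite_range' hfin t))
  have hmeas : ∀ t ∈ F, MeasurableSet (A ∩ {ω | R ω = t}) := fun t _ => ℱ.le t _ (hAt t)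
  have hcover : A = ⋃ t ∈ F, A ∩ {ω | R ω = t} := by
    ext ω
    simp [F]
  have hdisj : (F : Set ι).PairwiseDisjoint fun t => A ∩ {ω | R ω = t} :=
    fun t _ t' _ hne => disjoint_left.mpr fun ω h h' => hne (h.2.symm.trans h'.2)
  have hint := integrable_stopped_of_finite_range hR hfin hX.integrable
  calc ∫ ω in A, X (R ω) ω ∂μ
      = ∑ t ∈ F, ∫ ω in A ∩ {ω | R ω = t}, X (R ω) ω ∂μ := by
        nth_rewrite 1 [hcover]
        exact integral_biUnion_finset F hmeas hdisj fun t _ => hint.integrableOn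
    _ = ∑ t ∈ F, ∫ ω in A ∩ {ω | R ω = t}, X n ω ∂μ := by
        refine Finset.sum_congr rfl fun t ht => ?_
        rw [setIntegral_congr_fun (hmeas t ht) fun ω hω => by rw [hω.2]]
        obtain ⟨ω, rfl⟩ : t ∈ range R := hfin.mem_toFinset.mp ht
        exact hX.setIntegral_eq (hRn ω) (hAt _)
    _ = ∫ ω in A, X n ω ∂μ := by
        nth_rewrite 2 [hcover]
        exact (integral_biUnion_finset F hmeas hdisj fun t _ =>
          (hX.integrable n).integrableOn).symm

lemma Martingale.stopped_ae_eq_condExp_of_finite_range [IsFiniteMeasure μ]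
    (hX : Martingale X ℱ μ) (hR : IsStoppingTime ℱ (fun ω => (R ω : WithTop ι)))
    (hfin : (range R).Finite) {n : ι} (hRn : ∀ ω, R ω ≤ n) :
    (fun ω => X (R ω) ω) =ᵐ[μ] μ[X n | hR.measurableSpace] :=
  ae_eq_condExp_of_forall_setIntegral_eq
    (hR.measurableSpace_le_of_le fun ω => WithTop.coe_le_coe.mpr (hRn ω)) (hX.integrable n)
    (fun _ _ _ => (integrable_stopped_of_finite_range hR hfin hX.integrable).integrableOn)
    (fun _ hA _ => hX.setIntegral_stopped_eq_of_finite_range hR hfin hRn hA)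
    (hX.stronglyAdapted.stronglyMeasurable_stopped_of_finite_range hR hfin).aestronglyMeasurable

lemma Martingale.integral_eq_of_tendsto_stopped [IsFiniteMeasure μ] {X : ι → Ω → ℝ}
    (hX : Martingale X ℱ μ) {R : ℕ → Ω → ι}
    (hR : ∀ k, IsStoppingTime ℱ (fun ω => (R k ω : WithTop ι)))
    (hfin : ∀ k, (range (R k)).Finite) {n : ι} (hRn : ∀ k ω, R k ω ≤ n) {Y : Ω → ℝ}
    (hY : ∀ᵐ ω ∂μ, Tendsto (fun k => X (R k ω) ω) atTop (𝓝 (Y ω))) :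
    ∫ ω, Y ω ∂μ = ∫ ω, X n ω ∂μ := by
  have hUI : UniformIntegrable (fun k ω => X (R k ω) ω) 1 μ :=
    ((hX.integrable n).uniformIntegrable_condExp fun k =>
      (hR k).measurableSpace_le_of_le fun ω => WithTop.coe_le_coe.mpr (hRn k ω)).ae_eq
      fun k => (hX.stopped_ae_eq_condExp_of_finite_range (hR k) (hfin k) (hRn k)).symm
  have hYint : Integrable Y μ := hUI.integrable_of_ae_tendsto hY
  have hL1 := tendsto_Lp_finite_of_tendsto_ae le_rfl ENNReal.one_ne_top hUI.1
    (memLp_one_iff_integrable.mpr hYint) hUI.2.1 hY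
  have hconst : ∀ k, ∫ ω, X (R k ω) ω ∂μ = ∫ ω, X n ω ∂μ := fun k => by
    simpa using hX.setIntegral_stopped_eq_of_finite_range (hR k) (hfin k) (hRn k)
      (@MeasurableSet.univ _ (hR k).measurableSpace)
  refine tendsto_nhds_unique (tendsto_integral_of_L1' Y hYint.1 (Eventually.of_forall fun k =>
    integrable_stopped_of_finite_range (hR k) (hfin k) hX.integrable) hL1) ?_
  simp only [hconst, tendsto_const_nhds]

end PartialOrder

lemma IsStoppingTime.exists_roundUp [LinearOrder ι] {ℱ : Filtration ι m} {S : Ω → ι}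
    (hS : IsStoppingTime ℱ (fun ω => (S ω : WithTop ι)))
    {G : Set ι} (hG : G.Finite) (hSG : ∀ ω, ∃ g ∈ G, S ω ≤ g) :
    ∃ R : Ω → ι, IsStoppingTime ℱ (fun ω => (R ω : WithTop ι)) ∧
      ∀ ω, R ω ∈ G ∧ S ω ≤ R ω ∧ ∀ g ∈ G, S ω ≤ g → R ω ≤ g := by
  have hmin : ∀ ω, ∃ r ∈ G, S ω ≤ r ∧ ∀ g ∈ G, S ω ≤ g → r ≤ g := fun ω => by
    obtain ⟨r, ⟨hrG, hSr⟩, hr⟩ := (hG.subset (sep_subset G (S ω ≤ ·))).exists_minimal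
      (by obtain ⟨g, hg⟩ := hSG ω; exact ⟨g, hg⟩)
    exact ⟨r, hrG, hSr, fun g hgG hSg => (le_total r g).elim id (hr ⟨hgG, hSg⟩)⟩
  choose R hRG hSR hRmin using hmin
  refine ⟨R, fun u => ?_, fun ω => ⟨hRG ω, hSR ω, hRmin ω⟩⟩
  have hSle : ∀ g, MeasurableSet[ℱ g] {ω | S ω ≤ g} := fun g => by
    simpa only [WithTop.coe_le_coe] using hS g
  have hset : {ω | (R ω : WithTop ι) ≤ u} = ⋃ g ∈ {g ∈ G | g ≤ u}, {ω | S ω ≤ g} := by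
    ext ω
    simp only [WithTop.coe_le_coe, mem_ofPred_eq, mem_iUnion, exists_prop]
    exact ⟨fun h => ⟨R ω, ⟨hRG ω, h⟩, hSR ω⟩,
      fun ⟨g, ⟨hgG, hgu⟩, hSg⟩ => (hRmin ω g hgG hSg).trans hgu⟩
  rw [hset]
  exact MeasurableSet.biUnion (hG.subset (sep_subset _ _)).countable
    fun g hg => ℱ.mono hg.2 _ (hSle g)

end MeasureTheory

open Metric in
lemma IsCompact.exists_finite_upper_approx {K : Set ℝ} (hK : IsCompact K) {ε : ℝ} (hε : 0 < ε) :
    ∃ G : Set K, G.Finite ∧ ∀ s : K, ∃ g ∈ G, s ≤ g ∧ (g : ℝ) ≤ s + ε := by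
  obtain ⟨t, htK, htfin, hcover⟩ := finite_cover_balls_of_compact hK (half_pos hε)
  -- the largest point of `K` within `ε / 2` of a centre lies above every point of `K` near it
  set top : ℝ → ℝ := fun x => sSup (K ∩ closedBall x (ε / 2))
  have htop_mem : ∀ x ∈ K, top x ∈ K ∩ closedBall x (ε / 2) := fun x hx =>
    (hK.inter_right isClosed_closedBall).sSup_mem ⟨x, hx, mem_closedBall_self (half_pos hε).le⟩
  refine ⟨Subtype.val ⁻¹' (top '' t), (htfin.image top).preimage Subtype.val_injective.injOn,
    fun s => ?_⟩
  obtain ⟨x, hxt, hsx⟩ := mem_iUnion₂.mp (hcover s.2)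
  have hs : (s : ℝ) ∈ K ∩ closedBall x (ε / 2) := ⟨s.2, ball_subset_closedBall hsx⟩
  have hbdd : BddAbove (K ∩ closedBall x (ε / 2)) :=
    isBounded_closedBall.bddAbove.mono inter_subset_right
  refine ⟨⟨top x, (htop_mem x (htK hxt)).1⟩, ⟨x, hxt, rfl⟩, le_csSup hbdd hs, ?_⟩
  have h1 := (abs_sub_le_iff.mp (mem_closedBall.mp (htop_mem x (htK hxt)).2)).1
  have h2 := (abs_sub_le_iff.mp (mem_closedBall.mp hs.2)).2
  show top x ≤ s + ε
  linarith

lemma IsCompact.exists_stoppingTime_tendsto_nhdsGE {Ω : Type*} {m : MeasurableSpace Ω}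
    {K : Set ℝ} (hK : IsCompact K) {ℱ : Filtration K m} {S : Ω → K}
    (hS : IsStoppingTime ℱ (fun ω => (S ω : WithTop K))) :
    ∃ R : ℕ → Ω → K, (∀ k, IsStoppingTime ℱ (fun ω => (R k ω : WithTop K))) ∧
      (∀ k, (range (R k)).Finite) ∧ ∀ ω, Tendsto (fun k => R k ω) atTop (𝓝[≥] (S ω)) := by
  have hroundUp : ∀ k : ℕ, ∃ R : Ω → K, IsStoppingTime ℱ (fun ω => (R ω : WithTop K)) ∧
      (range R).Finite ∧ ∀ ω, S ω ≤ R ω ∧ (R ω : ℝ) ≤ S ω + 1 / (k + 1) := fun k => by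
    obtain ⟨G, hGfin, hG⟩ := hK.exists_finite_upper_approx (ε := 1 / (k + 1)) (by positivity)
    obtain ⟨R, hR, hRG⟩ := hS.exists_roundUp hGfin fun ω =>
      let ⟨g, hg, hSg, _⟩ := hG (S ω); ⟨g, hg, hSg⟩
    refine ⟨R, hR, hGfin.subset (range_subset_iff.mpr fun ω => (hRG ω).1),
      fun ω => ⟨(hRG ω).2.1, ?_⟩⟩
    obtain ⟨g, hg, hSg, hgS⟩ := hG (S ω)
    exact (Subtype.coe_le_coe.mpr ((hRG ω).2.2 g hg hSg)).trans hgS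
  choose R hR hfin hRS using hroundUp
  refine ⟨R, hR, hfin, fun ω => tendsto_nhdsWithin_iff.mpr ⟨?_, .of_forall fun k => (hRS k ω).1⟩⟩
  refine tendsto_subtype_rng.mpr (tendsto_of_tendsto_of_tendsto_of_le_of_le tendsto_const_nhds
    ?_ (fun k => (hRS k ω).1) fun k => (hRS k ω).2)
  simpa using tendsto_one_div_add_atTop_nhds_zero_nat.const_add (S ω : ℝ)

/-- Martingale characterization by stopping times on time scales: a right-continuous
adapted process `X` on a bounded time scale `T` (min `0`, max `b`) whose stopped values
are all integrable is a martingale if and only if `E[X_S] = E[X_0]` for every stopping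
time `S`. -/
theorem stmt_5 (T : Set ℝ) (hcl : IsClosed T) (b : ℝ) (h0T : (0 : ℝ) ∈ T) (hbT : b ∈ T)
    (hsub : T ⊆ Set.Icc 0 b)
    {Ω : Type*} {mΩ : MeasurableSpace Ω} (P : Measure Ω) [IsProbabilityMeasure P]
    (ℱ : Filtration ↥T mΩ) (X : ↥T → Ω → ℝ)
    (hadp : Adapted ℱ X)
    (hrc : ∀ ω, ∀ t : ↥T, ContinuousWithinAt (fun s : ↥T => X s ω) (Set.Ici t) t)
    (hint : ∀ S : Ω → ↥T, IsStoppingTime ℱ (fun ω => (S ω : WithTop ↥T)) → Integrable (fun ω => X (S ω) ω) P) :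
    Martingale X ℱ P ↔
      ∀ S : Ω → ↥T, IsStoppingTime ℱ (fun ω => (S ω : WithTop ↥T)) →
        ∫ ω, X (S ω) ω ∂P = ∫ ω, X ⟨0, h0T⟩ ω ∂P := by
  have hb : ∀ t : ↥T, t ≤ ⟨b, hbT⟩ := fun t => Subtype.coe_le_coe.mp (hsub t.2).2
  refine ⟨fun hX S hS => ?_, fun h => martingale_of_integral_stopped_eq hadp.stronglyAdapted
    (fun t => hint _ (isStoppingTime_const ℱ t)) _ h⟩
  obtain ⟨R, hR, hfin, hRS⟩ :=
    (isCompact_Icc.of_isClosed_subset hcl hsub).exists_stoppingTime_tendsto_nhdsGE hS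
  have hXS : ∀ ω, Tendsto (fun k => X (R k ω) ω) atTop (𝓝 (X (S ω) ω)) := fun ω =>
    (hrc ω (S ω)).tendsto.comp (hRS ω)
  calc ∫ ω, X (S ω) ω ∂P
      = ∫ ω, X ⟨b, hbT⟩ ω ∂P :=
        hX.integral_eq_of_tendsto_stopped hR hfin (fun _ _ => hb _) (ae_of_all _ hXS)
    _ = ∫ ω, X ⟨0, h0T⟩ ω ∂P := by
        simpa using (hX.setIntegral_eq (hb ⟨0, h0T⟩) MeasurableSet.univ).symm
end

section
/- Vanishing of martingales with vanishing characteristic on time scales: Let 𝕋 be a bounded time scale with minimum 0 and maximum b ∈ 𝕋, and let Z = (Z_t)_{t∈𝕋} be a right-continuous square-integrable martingale with respect to a filtration (ℱ_t)_{t∈𝕋} on a probability space (Ω, 𝒜, P) such that Z_0 = 0 almost surely and Z² = (Z_t²)_{t∈𝕋} is also a martingale. Then P[Z_t = 0 for all t ∈ 𝕋] = 1, i.e. Z is indistinguishable from the zero process. -/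
/-!
Since `Z²` is a martingale, `E[Z_t²] = E[Z_0²] = 0`, so each `Z_t` vanishes almost surely.
Right-continuity upgrades this to all `t` at once: the points of `T` isolated from the right
form a countable set, which together with a countable dense subset gives a countable `D` on
which `Z` vanishes almost surely, and every other `t` is a limit from the right of points of `D`.
-/
open MeasureTheory Filter Topology Set

theorem ae_eq_zero_of_martingale_sq {ι Ω : Type*} [Preorder ι] {m : MeasurableSpace Ω}
    {μ : Measure Ω} {ℱ : Filtration ι m} [SigmaFiniteFiltration μ ℱ] {f : ι → Ω → ℝ}
    (hf : Martingale (fun t ω => f t ω ^ 2) ℱ μ) {i j : ι} (hij : i ≤ j) (hi : f i =ᵐ[μ] 0) :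
    f j =ᵐ[μ] 0 := by
  have hint : ∫ ω, f j ω ^ 2 ∂μ = 0 := by
    have := hf.setIntegral_eq hij MeasurableSet.univ
    rw [setIntegral_univ, setIntegral_univ] at this
    rw [← this, integral_eq_zero_of_ae]
    filter_upwards [hi] with ω hω
    simp [hω]
  filter_upwards [(integral_eq_zero_iff_of_nonneg (fun ω => sq_nonneg (f j ω))
    (hf.integrable j)).mp hint] with ω hω
  exact pow_eq_zero_iff two_ne_zero |>.mp hω

theorem countable_setOf_notMem_closure_Ioi {α : Type*} [LinearOrder α] [TopologicalSpace α]
    [OrderTopology α] [SecondCountableTopology α] (T : Set α) :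
    {t : T | t ∉ closure (Ioi t)}.Countable := by
  -- The subspace topology on `T` need not be its order topology, so we argue in `α`.
  refine ((countable_setOfPred_isolated_right_within (s := T)).preimage
    Subtype.coe_injective).mono fun t ht => ?_
  refine ⟨t.2, ?_⟩
  rw [← not_neBot, ← mem_closure_iff_nhdsWithin_neBot]
  rwa [mem_ofPred_eq, closure_subtype, ← preimage_subtype_val_Ioi, image_preimage_eq_inter_range,
    Subtype.range_coe, inter_comm] at ht

theorem exists_countable_forall_mem_or_mem_closure_inter_Ioi {α : Type*} [LinearOrder α]
    [TopologicalSpace α] [OrderTopology α] [SecondCountableTopology α] (T : Set α) :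
    ∃ D : Set T, D.Countable ∧ ∀ t, t ∈ D ∨ t ∈ closure (D ∩ Ioi t) := by
  obtain ⟨D₀, hD₀c, hD₀d⟩ := TopologicalSpace.exists_countable_dense T
  refine ⟨D₀ ∪ {t | t ∉ closure (Ioi t)}, hD₀c.union (countable_setOf_notMem_closure_Ioi T),
    fun t => or_iff_not_imp_left.mpr fun ht => ?_⟩
  have ht' : t ∈ closure (Ioi t) := by_contra fun h => ht (Or.inr h)
  refine closure_mono (inter_subset_inter_left _ subset_union_left) ?_
  rw [inter_comm]
  exact closure_minimal (hD₀d.open_subset_closure_inter isOpen_Ioi) isClosed_closure ht'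

theorem ae_forall_eq_of_continuousWithinAt_Ici {α Ω E : Type*} [LinearOrder α]
    [TopologicalSpace α] [OrderTopology α] [SecondCountableTopology α] {T : Set α}
    {m : MeasurableSpace Ω} {μ : Measure Ω} [TopologicalSpace E] [T2Space E] {X Y : T → Ω → E}
    (hX : ∀ ω t, ContinuousWithinAt (fun s => X s ω) (Ici t) t)
    (hY : ∀ ω t, ContinuousWithinAt (fun s => Y s ω) (Ici t) t)
    (hXY : ∀ t, X t =ᵐ[μ] Y t) :
    ∀ᵐ ω ∂μ, ∀ t, X t ω = Y t ω := by
  obtain ⟨D, hDc, hD⟩ := exists_countable_forall_mem_or_mem_closure_inter_Ioi T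
  filter_upwards [(ae_ball_iff hDc).mpr fun d _ => hXY d] with ω hω t
  rcases hD t with htD | htD
  · exact hω t htD
  have : (𝓝[D ∩ Ioi t] t).NeBot := mem_closure_iff_nhdsWithin_neBot.mp htD
  have hsub : D ∩ Ioi t ⊆ Ici t := fun s hs => le_of_lt hs.2
  refine tendsto_nhds_unique ((hX ω t).mono hsub) (((hY ω t).mono hsub).congr' ?_)
  filter_upwards [self_mem_nhdsWithin] with s hs
  exact (hω s hs.1).symm

theorem stmt_6_general (T : Set ℝ) (b : ℝ) (h0T : (0 : ℝ) ∈ T)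
    (hsub : T ⊆ Set.Icc 0 b)
    {Ω : Type*} {mΩ : MeasurableSpace Ω} (P : Measure Ω) [IsProbabilityMeasure P]
    (ℱ : Filtration ↥T mΩ) (Z : ↥T → Ω → ℝ)
    (hrc : ∀ ω, ∀ t : ↥T, ContinuousWithinAt (fun s : ↥T => Z s ω) (Set.Ici t) t)
    (hZ0 : Z ⟨0, h0T⟩ =ᵐ[P] 0)
    (hZ2 : Martingale (fun t ω => (Z t ω) ^ 2) ℱ P) :
    ∀ᵐ ω ∂P, ∀ t : ↥T, Z t ω = 0 :=
  ae_forall_eq_of_continuousWithinAt_Ici hrc (fun _ _ => continuousWithinAt_const)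
    fun t => ae_eq_zero_of_martingale_sq hZ2 (Subtype.coe_le_coe.mp (hsub t.2).1) hZ0

/-- Vanishing of martingales with vanishing characteristic on time scales: if `Z` is a
right-continuous square-integrable martingale on a bounded time scale `T` (min `0`,
max `b`) with `Z_0 = 0` a.s. and `Z²` is also a martingale, then `Z` is
indistinguishable from the zero process. -/
theorem stmt_6 (T : Set ℝ) (hcl : IsClosed T) (b : ℝ) (h0T : (0 : ℝ) ∈ T) (hbT : b ∈ T)
    (hsub : T ⊆ Set.Icc 0 b)
    {Ω : Type*} {mΩ : MeasurableSpace Ω} (P : Measure Ω) [IsProbabilityMeasure P]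
    (ℱ : Filtration ↥T mΩ) (Z : ↥T → Ω → ℝ)
    (hZ : Martingale Z ℱ P)
    (hsq : ∀ t : ↥T, MemLp (Z t) 2 P)
    (hrc : ∀ ω, ∀ t : ↥T, ContinuousWithinAt (fun s : ↥T => Z s ω) (Set.Ici t) t)
    (hZ0 : Z ⟨0, h0T⟩ =ᵐ[P] 0)
    (hZ2 : Martingale (fun t ω => (Z t ω) ^ 2) ℱ P) :
    ∀ᵐ ω ∂P, ∀ t : ↥T, Z t ω = 0 :=
  stmt_6_general T b h0T hsub P ℱ Z hrc hZ0 hZ2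
end

section
/- Closedness of the space of square-integrable predictable processes on a time scale: Let 𝕋 be a bounded time scale with minimum 0 and maximum b ∈ 𝕋, (ℱ_t)_{t∈𝕋} a filtration on a probability space (Ω, 𝒜, P), and μ the Borel measure on 𝕋 determined by μ((s,t] ∩ 𝕋) = t − s for all s ≤ t in 𝕋 and μ({0}) = 0. Call a (Borel(𝕋) ⊗ ℱ_b)-measurable function g : 𝕋 × Ω → ℝ predictable if for every t ∈ 𝕋 the function (s, ω) ↦ g(s, ω)·1_{[0,t]}(s) is measurable with respect to the product σ-algebra Borel(𝕋) ⊗ ℱ_{ρ(t)}. Then the set of those elements of L²(𝕋 × Ω, μ ⊗ P) that admit a predictable representative is a closed linear subspace of L²(𝕋 × Ω, μ ⊗ P). -/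
open MeasureTheory Filter Topology

open scoped Classical in
/-- Limit of a real sequence, with junk value `0` where there is no limit. -/
noncomputable def limAux (s : ℕ → ℝ) : ℝ :=
  if h : ∃ c, Tendsto s atTop (𝓝 c) then h.choose else 0

/-- Pointwise limit of a sequence of functions, with junk value `0` where there is no limit. -/
noncomputable def limFn0 {α : Type*} (f : ℕ → α → ℝ) (x : α) : ℝ :=
  limAux (fun n => f n x)

lemma limFn0_eq {α : Type*} {f : ℕ → α → ℝ} {x : α} {c : ℝ}
    (h : Tendsto (fun n => f n x) atTop (𝓝 c)) : limFn0 f x = c := by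
  classical
  have he : ∃ c, Tendsto (fun n => f n x) atTop (𝓝 c) := ⟨c, h⟩
  simp only [limFn0, limAux, dif_pos he]
  exact tendsto_nhds_unique he.choose_spec h

lemma limFn0_congr {α : Type*} {f g : ℕ → α → ℝ} {x : α} (h : ∀ n, f n x = g n x) :
    limFn0 f x = limFn0 g x := by
  have : (fun n => f n x) = fun n => g n x := funext h
  simp only [limFn0]
  rw [this]

lemma measurable_limFn0 {α : Type*} {m : MeasurableSpace α} {f : ℕ → α → ℝ}
    (hf : ∀ n, @Measurable _ _ m _ (f n)) : @Measurable _ _ m _ (limFn0 f) := by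
  letI := m
  set A : Set α := {x | ∃ c, Tendsto (fun n => f n x) atTop (𝓝 c)} with hA_def
  have hA : MeasurableSet A := measurableSet_exists_tendsto hf
  have hf' : ∀ n, Measurable (A.indicator (f n)) := fun n => (hf n).indicator hA
  have htend : ∀ x, Tendsto (fun n => A.indicator (f n) x) atTop (𝓝 (limFn0 f x)) := by
    intro x
    by_cases hx : x ∈ A
    · obtain ⟨c, hc⟩ := hx
      have : (fun n => A.indicator (f n) x) = fun n => f n x := by
        funext n; exact Set.indicator_of_mem (show x ∈ A from ⟨c, hc⟩) (f n)
      rw [this, limFn0_eq hc]; exact hc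
    · have : (fun n => A.indicator (f n) x) = fun _ => (0 : ℝ) := by
        funext n; exact Set.indicator_of_notMem hx (f n)
      rw [this]
      have hne : ¬ ∃ c, Tendsto (fun n => f n x) atTop (𝓝 c) := hx
      simp only [limFn0, limAux, dif_neg hne]
      exact tendsto_const_nhds
  exact measurable_of_tendsto_metrizable hf' (tendsto_pi_nhds.2 htend)

set_option synthInstance.maxHeartbeats 1000000 in
set_option maxHeartbeats 1000000 in
/-- Closedness of the space of square-integrable predictable processes on a time scale:
with `μ` the Borel measure on the bounded time scale `T` (min `0`, max `b`) determined by
`μ((s,t] ∩ T) = t - s` and `μ({0}) = 0`, and `ρ` the backward jump operator, the set of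
elements of `L²(T × Ω, μ ⊗ P)` admitting a predictable representative (i.e. a
`Borel(T) ⊗ ℱ_b`-measurable `g` such that for each `t`, `(s,ω) ↦ g(s,ω) 1_{[0,t]}(s)`
is `Borel(T) ⊗ ℱ_{ρ(t)}`-measurable) is a closed linear subspace. -/
theorem stmt_9 (T : Set ℝ) (hcl : IsClosed T) (b : ℝ) (h0T : (0 : ℝ) ∈ T) (hbT : b ∈ T)
    (hsub : T ⊆ Set.Icc 0 b)
    {Ω : Type*} {mΩ : MeasurableSpace Ω} (P : Measure Ω) [IsProbabilityMeasure P]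
    (ℱ : Filtration ↥T mΩ)
    (μ : Measure ↥T)
    (hμ : ∀ s t : ↥T, s ≤ t →
      μ {u : ↥T | s < u ∧ u ≤ t} = ENNReal.ofReal ((t : ℝ) - (s : ℝ)))
    (hμ0 : μ {(⟨0, h0T⟩ : ↥T)} = 0)
    (ρ : ↥T → ↥T)
    (hρ : ∀ t : ↥T, (0 : ℝ) < (t : ℝ) → (ρ t : ℝ) = sSup {s : ℝ | s ∈ T ∧ s < (t : ℝ)})
    (hρ0 : ρ ⟨0, h0T⟩ = ⟨0, h0T⟩) :
    ∃ V : Submodule ℝ (Lp ℝ 2 (μ.prod P)),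
      (V : Set (Lp ℝ 2 (μ.prod P))) =
        {f : Lp ℝ 2 (μ.prod P) | ∃ g : ↥T × Ω → ℝ,
          (@Measurable _ _ (MeasurableSpace.prod inferInstance (ℱ ⟨b, hbT⟩)) _ g) ∧
          (∀ t : ↥T, @Measurable _ _ (MeasurableSpace.prod inferInstance (ℱ (ρ t))) _
            (fun p : ↥T × Ω => g p * Set.indicator (Set.Iic t) (fun _ => (1 : ℝ)) p.1)) ∧
          (f : ↥T × Ω → ℝ) =ᵐ[μ.prod P] g} ∧
      IsClosed (V : Set (Lp ℝ 2 (μ.prod P))) := by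
  classical
  set mb : MeasurableSpace (↥T × Ω) := MeasurableSpace.prod inferInstance (ℱ ⟨b, hbT⟩) with hmb
  set S : Set (Lp ℝ 2 (μ.prod P)) :=
    {f : Lp ℝ 2 (μ.prod P) | ∃ g : ↥T × Ω → ℝ,
      (@Measurable _ _ mb _ g) ∧
      (∀ t : ↥T, @Measurable _ _ (MeasurableSpace.prod inferInstance (ℱ (ρ t))) _
        (fun p : ↥T × Ω => g p * Set.indicator (Set.Iic t) (fun _ => (1 : ℝ)) p.1)) ∧
      (f : ↥T × Ω → ℝ) =ᵐ[μ.prod P] g} with hS_def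
  have zero_mem : (0 : Lp ℝ 2 (μ.prod P)) ∈ S := by
    refine ⟨0, @measurable_const _ _ _ mb _, fun t => ?_, Lp.coeFn_zero _ _ _⟩
    simpa using (@measurable_const ℝ _ _ (MeasurableSpace.prod inferInstance (ℱ (ρ t))) 0)
  have add_mem : ∀ f₁ f₂, f₁ ∈ S → f₂ ∈ S → f₁ + f₂ ∈ S := by
    rintro f₁ f₂ ⟨g₁, hg₁b, hg₁t, hg₁e⟩ ⟨g₂, hg₂b, hg₂t, hg₂e⟩
    refine ⟨g₁ + g₂, hg₁b.add hg₂b, fun t => ?_, ?_⟩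
    · have := (hg₁t t).add (hg₂t t)
      convert this using 1
      funext p; simp only [Pi.add_apply]; ring
    · filter_upwards [Lp.coeFn_add f₁ f₂, hg₁e, hg₂e] with p hp h1 h2
      rw [hp, Pi.add_apply, h1, h2, Pi.add_apply]
  have smul_mem : ∀ (c : ℝ) f, f ∈ S → c • f ∈ S := by
    rintro c f ⟨g, hgb, hgt, hge⟩
    refine ⟨fun p => c * g p, hgb.const_mul c, fun t => ?_, ?_⟩
    · have := (hgt t).const_mul c
      convert this using 1
      funext p; ring
    · filter_upwards [Lp.coeFn_smul c f, hge] with p hp h1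
      rw [hp, Pi.smul_apply, h1, smul_eq_mul]
  refine ⟨{ carrier := S
            add_mem' := fun {f₁ f₂} h1 h2 => add_mem f₁ f₂ h1 h2
            zero_mem' := zero_mem
            smul_mem' := fun c f h => smul_mem c f h }, rfl, ?_⟩
  -- Closedness
  refine IsSeqClosed.isClosed ?_
  intro fseq f hmem hconv
  choose g hgb hgt hge using hmem
  -- convergence in measure, and a.e. convergent subsequence
  have hmeas : TendstoInMeasure (μ.prod P) (fun n => (fseq n : ↥T × Ω → ℝ)) atTop f :=
    tendstoInMeasure_of_tendsto_Lp hconv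
  obtain ⟨ns, hns, hae⟩ := hmeas.exists_seq_tendsto_ae
  set g' : ℕ → ↥T × Ω → ℝ := fun i => g (ns i) with hg'
  set G : ↥T × Ω → ℝ := limFn0 g' with hG
  have hGb : @Measurable _ _ mb _ G :=
    measurable_limFn0 (fun i => hgb (ns i))
  have hGt : ∀ t : ↥T, @Measurable _ _ (MeasurableSpace.prod inferInstance (ℱ (ρ t))) _
      (fun p : ↥T × Ω => G p * Set.indicator (Set.Iic t) (fun _ => (1 : ℝ)) p.1) := by
    intro t
    set ind : ↥T × Ω → ℝ := fun p => Set.indicator (Set.Iic t) (fun _ => (1 : ℝ)) p.1 with hind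
    have key : (fun p : ↥T × Ω => G p * ind p)
        = limFn0 (fun i p => g' i p * ind p) := by
      funext p
      by_cases hp : p.1 ∈ Set.Iic t
      · have hi : ind p = 1 := Set.indicator_of_mem hp (fun _ => (1:ℝ))
        rw [hi, mul_one, hG]
        have : ∀ i, (fun i p => g' i p * ind p) i p = g' i p := by
          intro i; simp [hi]
        exact (limFn0_congr this).symm
      · have hi : ind p = 0 := Set.indicator_of_notMem hp (fun _ => (1:ℝ))
        rw [hi, mul_zero]
        have : Tendsto (fun i => g' i p * ind p) atTop (𝓝 0) := by
          simp only [hi, mul_zero]; exact tendsto_const_nhds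
        exact (limFn0_eq this).symm
    rw [key]
    exact measurable_limFn0 (fun i => hgt (ns i) t)
  refine ⟨G, hGb, hGt, ?_⟩
  -- a.e. equality
  have hae' : ∀ᵐ p ∂(μ.prod P), ∀ i, (fseq (ns i) : ↥T × Ω → ℝ) p = g' i p := by
    rw [MeasureTheory.ae_all_iff]
    exact fun i => hge (ns i)
  filter_upwards [hae, hae'] with p hp hp'
  have : Tendsto (fun i => g' i p) atTop (𝓝 ((f : ↥T × Ω → ℝ) p)) := by
    refine hp.congr fun i => hp' i
  exact (limFn0_eq this).symm
end

section
/- Failure of the Lévy martingale characterization of Brownian motion on time scales: There exist a bounded time scale 𝕋 (one may take 𝕋 = {0, 1}), a probability space (Ω, 𝒜, P) with a filtration (ℱ_t)_{t∈𝕋}, and a martingale X = (X_t)_{t∈𝕋} with respect to (ℱ_t) such that X_0 = 0 almost surely and (X_t² − t)_{t∈𝕋} is a martingale, yet X is not a Brownian motion indexed by 𝕋: the law of X_1 under P is not the standard Gaussian measure N(0,1) on ℝ. -/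
/-!
On the two-point time scale `{0, 1}`, take the filtration that is trivial at time `0` and full at
time `1`, and the process `X₀ = 0`, `X₁ = ξ`. Then `X` is a martingale as soon as `E ξ = 0`, and
`X² - t`, which is `0` at time `0` and `ξ² - 1` at time `1`, is one as soon as `E ξ² = 1`.
So Lévy's hypotheses only see the first two moments of `ξ`, and a Rademacher variable, which has
an atom at `1`, satisfies them without being Gaussian.
-/

open MeasureTheory ProbabilityTheory

open scoped ENNReal

namespace MeasureTheory

variable {Ω ι E : Type*} [LinearOrder ι] {m₀ : MeasurableSpace Ω}

def Filtration.trivialUntil (m₀ : MeasurableSpace Ω) (t₀ : ι) : Filtration ι m₀ where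
  seq t := if t ≤ t₀ then ⊥ else m₀
  mono' s t hst := by
    by_cases ht : t ≤ t₀
    · simp only [ht, hst.trans ht, if_true, le_rfl]
    · dsimp only
      split_ifs <;> simp
  le' t := by split_ifs <;> simp

theorem Filtration.trivialUntil_of_le {t₀ t : ι} (ht : t ≤ t₀) :
    Filtration.trivialUntil m₀ t₀ t = ⊥ :=
  if_pos ht

theorem Filtration.trivialUntil_of_lt {t₀ t : ι} (ht : t₀ < t) :
    Filtration.trivialUntil m₀ t₀ t = m₀ :=
  if_neg ht.not_ge

variable [NormedAddCommGroup E] [NormedSpace ℝ E] [CompleteSpace E]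

theorem martingale_ite_le_trivialUntil {μ : Measure Ω} [IsFiniteMeasure μ] {ξ : Ω → E} (t₀ : ι)
    (hξ : StronglyMeasurable ξ) (hξi : Integrable ξ μ) (hξ0 : ∫ ω, ξ ω ∂μ = 0) :
    Martingale (fun t => if t ≤ t₀ then 0 else ξ) (Filtration.trivialUntil m₀ t₀) μ := by
  refine ⟨fun t => ?_, fun s t hst => ?_⟩
  · rcases le_or_gt t t₀ with ht | ht
    · simp only [ht, if_true]
      exact stronglyMeasurable_zero
    · simp only [ht.not_ge, if_false]
      rw [Filtration.trivialUntil_of_lt ht]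
      exact hξ
  · rcases le_or_gt t t₀ with ht | ht
    · simp [ht, hst.trans ht]
    rcases le_or_gt s t₀ with hs | hs
    · simp only [ht.not_ge, hs, if_true, if_false, Filtration.trivialUntil_of_le hs]
      filter_upwards [condExp_bot_ae_eq (μ := μ) ξ] with ω hω
      simp [hω, hξ0]
    · simp only [ht.not_ge, hs.not_ge, if_false, Filtration.trivialUntil_of_lt hs]
      rw [condExp_of_stronglyMeasurable le_rfl hξ hξi]

end MeasureTheory

namespace ProbabilityTheory

noncomputable def rademacher : Measure ℝ :=
  (2 : ℝ≥0∞)⁻¹ • (Measure.dirac 1 + Measure.dirac (-1))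

instance : IsProbabilityMeasure rademacher := by
  constructor
  simp only [rademacher, Measure.smul_apply, Measure.add_apply, measure_univ, smul_eq_mul]
  rw [← two_mul, mul_one, ENNReal.inv_mul_cancel] <;> norm_num

lemma integrable_rademacher (f : ℝ → ℝ) : Integrable f rademacher :=
  ((integrable_dirac enorm_lt_top).add_measure (integrable_dirac enorm_lt_top)).smul_measure
    (by simp)

lemma integral_rademacher (f : ℝ → ℝ) : ∫ x, f x ∂rademacher = (f 1 + f (-1)) / 2 := by
  rw [rademacher, integral_smul_measure, integral_add_measure (integrable_dirac enorm_lt_top)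
    (integrable_dirac enorm_lt_top), integral_dirac, integral_dirac]
  simp only [ENNReal.toReal_inv, ENNReal.toReal_ofNat, smul_eq_mul]
  ring

lemma rademacher_ne_gaussianReal (μ : ℝ) {v : NNReal} (hv : v ≠ 0) :
    rademacher ≠ gaussianReal μ v := by
  intro h
  have h_atom : rademacher {1} = 2⁻¹ := by
    norm_num [rademacher]
  have h_no_atom : gaussianReal μ v {1} = 0 :=
    gaussianReal_absolutelyContinuous μ hv Real.volume_singleton
  rw [h, h_no_atom] at h_atom
  exact absurd h_atom.symm (by simp)

end ProbabilityTheory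

/-- Failure of the Lévy martingale characterization of Brownian motion on time scales:
there are a bounded time scale `T` (containing `0` and `1`; one may take `T = {0,1}`),
a filtered probability space and a martingale `X` with `X_0 = 0` a.s. such that
`(X_t² - t)` is a martingale, yet the law of `X_1` is not the standard Gaussian
`N(0,1)`. -/
theorem stmt_10 :
    ∃ (T : Set ℝ) (_ : IsClosed T) (_ : T.Nonempty) (_ : Bornology.IsBounded T)
      (h0T : (0 : ℝ) ∈ T) (h1T : (1 : ℝ) ∈ T)
      (Ω : Type) (mΩ : MeasurableSpace Ω) (P : Measure Ω) (_ : IsProbabilityMeasure P)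
      (ℱ : Filtration ↥T mΩ) (X : ↥T → Ω → ℝ),
      Martingale X ℱ P ∧
      X ⟨0, h0T⟩ =ᵐ[P] 0 ∧
      Martingale (fun (t : ↥T) ω => (X t ω) ^ 2 - (t : ℝ)) ℱ P ∧
      Measure.map (X ⟨1, h1T⟩) P ≠ gaussianReal 0 1 := by
  set T : Set ℝ := {0, 1}
  have h0T : (0 : ℝ) ∈ T := .inl rfl
  have h1T : (1 : ℝ) ∈ T := .inr rfl
  set t₀ : T := ⟨0, h0T⟩
  set X : T → ℝ → ℝ := fun t => if t ≤ t₀ then 0 else id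
  have hX0 : X t₀ = 0 := if_pos le_rfl
  have h10 : ¬(⟨1, h1T⟩ : T) ≤ t₀ := by simp [t₀]
  have hX1 : X ⟨1, h1T⟩ = id := if_neg h10
  have hX_sq : (fun (t : T) x => X t x ^ 2 - (t : ℝ)) =
      fun t => if t ≤ t₀ then 0 else fun x => x ^ 2 - 1 := by
    ext ⟨t, rfl | rfl⟩ x
    · simp [hX0, t₀]
    · simp [hX1, h10]
  refine ⟨T, T.toFinite.isClosed, ⟨0, h0T⟩, T.toFinite.isBounded, h0T, h1T, ℝ, inferInstance,
    rademacher, inferInstance, Filtration.trivialUntil _ t₀, X, ?_, .of_eq hX0, ?_, ?_⟩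
  · exact martingale_ite_le_trivialUntil t₀ stronglyMeasurable_id (integrable_rademacher _)
      (by simp [integral_rademacher])
  · rw [hX_sq]
    exact martingale_ite_le_trivialUntil t₀ (by fun_prop) (integrable_rademacher _)
      (by simp [integral_rademacher])
  · rw [hX1, Measure.map_id]
    exact rademacher_ne_gaussianReal 0 one_ne_zero
end
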